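/- arXiv:2202.13230 — 5 statements merged into one kernel-verified Lean document; each statement's English description precedes it below -/
import Mathlib

section
/- Let σ > 0, let γ satisfy 0 ≤ γ < 2/σ, and let T > 0. Let A be the real 2×2 matrix A = !![0, -1; 1/σ^2, γ] and set ω = √(1/σ² − γ²/4). Then the (1,1) entry (first row, first column) of the matrix exponential exp(−T·A) equals e^{−γT/2}·(cos(Tω) + (γ/(2ω))·sin(Tω)). -/
/-!
Since `0 ≤ γ < 2/σ`, the discriminant `γ² - 4/σ²` of `A` is negative. Hence the traceless
matrix `N = γ/2 - A` satisfies `N² = -ω²` by Cayley–Hamilton, `J = N/ω` is a square root of `-1`,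
and `a + b i ↦ a + b J` embeds `ℂ` into the `2 × 2` matrices. As `-(T • A) = -γT/2 + Tω J`,
continuity of that embedding carries `exp(-γT/2 + i Tω)` to `exp(-(T • A))`, whose `(0, 0)` entry
is then read off.
-/

open Matrix Real

theorem NormedSpace.exp_algebraMap_add_smul_of_mul_self_eq_neg_one {𝔸 : Type*} [NormedRing 𝔸]
    [NormedAlgebra ℝ 𝔸] [Algebra ℚ 𝔸] {J : 𝔸} (hJ : J * J = -1) (a b : ℝ) :
    NormedSpace.exp (algebraMap ℝ 𝔸 a + b • J) =
      algebraMap ℝ 𝔸 (Real.exp a * Real.cos b) + (Real.exp a * Real.sin b) • J := by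
  have hlift (z : ℂ) : Complex.liftAux J hJ z = algebraMap ℝ 𝔸 z.re + z.im • J :=
    Complex.liftAux_apply J hJ z
  have h := NormedSpace.map_exp (Complex.liftAux J hJ)
    (Complex.liftAux J hJ).toLinearMap.continuous_of_finiteDimensional ⟨a, b⟩
  rwa [hlift, hlift, ← Complex.exp_eq_exp_ℂ, Complex.exp_re, Complex.exp_im, eq_comm] at h

theorem Matrix.exp_algebraMap_add_smul_of_mul_self_eq_neg_one {m : Type*} [Fintype m]
    [DecidableEq m] {J : Matrix m m ℝ} (hJ : J * J = -1) (a b : ℝ) :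
    NormedSpace.exp (algebraMap ℝ _ a + b • J) =
      algebraMap ℝ _ (Real.exp a * Real.cos b) + (Real.exp a * Real.sin b) • J := by
  let : NormedRing (Matrix m m ℝ) := Matrix.linftyOpNormedRing
  let : NormedAlgebra ℝ (Matrix m m ℝ) := Matrix.linftyOpNormedAlgebra
  exact NormedSpace.exp_algebraMap_add_smul_of_mul_self_eq_neg_one hJ a b

theorem Matrix.mul_self_eq_neg_det_smul_one_of_trace_eq_zero {R : Type*} [CommRing R]
    {N : Matrix (Fin 2) (Fin 2) R} (hN : N.trace = 0) : N * N = -N.det • 1 := by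
  have h11 : N 1 1 = -N 0 0 := by rw [trace_fin_two] at hN; linear_combination hN
  ext i j
  fin_cases i <;> fin_cases j <;>
    simp only [Fin.zero_eta, Fin.mk_one, mul_apply, Fin.sum_univ_two, det_fin_two, h11,
      smul_apply, smul_eq_mul, one_apply_eq, one_apply_ne zero_ne_one, one_apply_ne one_ne_zero] <;>
    ring

theorem langevin_acf_underdamped_general (σ γ T : ℝ) (hγ0 : 0 ≤ γ)
    (hγ : γ < 2 / σ)
    (A : Matrix (Fin 2) (Fin 2) ℝ) (hA : A = !![0, -1; 1 / σ ^ 2, γ])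
    (ω : ℝ) (hω : ω = Real.sqrt (1 / σ ^ 2 - γ ^ 2 / 4)) :
    NormedSpace.exp (-(T • A)) 0 0 =
      Real.exp (-(γ * T) / 2) * (Real.cos (T * ω) + γ / (2 * ω) * Real.sin (T * ω)) := by
  have hdisc : 0 < 1 / σ ^ 2 - γ ^ 2 / 4 := by
    have := pow_lt_pow_left₀ hγ hγ0 two_ne_zero
    rw [div_pow, ← mul_one_div] at this
    linarith
  have hω0 : ω ≠ 0 := by rw [hω]; exact (Real.sqrt_pos.mpr hdisc).ne'
  have hωsq : ω ^ 2 = 1 / σ ^ 2 - γ ^ 2 / 4 := by rw [hω, Real.sq_sqrt hdisc.le]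
  set N : Matrix (Fin 2) (Fin 2) ℝ := !![γ / 2, 1; -(1 / σ ^ 2), -(γ / 2)] with hN
  have hNN : N * N = -(ω ^ 2) • 1 := by
    rw [mul_self_eq_neg_det_smul_one_of_trace_eq_zero (by simp [hN]), hωsq, hN, det_fin_two_of]
    congr 2
    ring
  have hJ : (ω⁻¹ • N) * (ω⁻¹ • N) = -1 := by
    rw [smul_mul_smul, hNN, smul_smul, show ω⁻¹ * ω⁻¹ * -ω ^ 2 = -1 by field_simp,
      neg_one_smul]
  have hdecomp : -(T • A) = algebraMap ℝ _ (-(γ * T) / 2) + (T * ω) • (ω⁻¹ • N) := by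
    rw [smul_smul, mul_assoc, mul_inv_cancel₀ hω0, mul_one, hA, hN]
    ext i j
    fin_cases i <;> fin_cases j <;>
      simp only [Fin.zero_eta, Fin.mk_one, Matrix.neg_apply, Matrix.add_apply, Matrix.smul_apply,
        algebraMap_matrix_apply, Algebra.algebraMap_self, RingHom.id_apply, of_apply, cons_val',
        cons_val_zero, cons_val_one, cons_val_fin_one, zero_ne_one, one_ne_zero, ↓reduceIte,
        smul_eq_mul] <;>
      ring
  have hN00 : N 0 0 = γ / 2 := rfl
  rw [hdecomp, Matrix.exp_algebraMap_add_smul_of_mul_self_eq_neg_one hJ]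
  simp only [Matrix.add_apply, algebraMap_matrix_apply, if_pos, Algebra.algebraMap_self,
    RingHom.id_apply, Matrix.smul_apply, hN00, smul_eq_mul]
  field_simp

/-- Underdamped regime of the Langevin autocorrelation formula (eq_corr_langevin):
for `0 ≤ γ < 2/σ`, the (1,1) entry of `exp(-T·A)` with `A = !![0, -1; 1/σ², γ]` equals
`e^{-γT/2}(cos(Tω) + (γ/(2ω)) sin(Tω))` where `ω = √(1/σ² - γ²/4)`. -/
theorem langevin_acf_underdamped (σ γ T : ℝ) (hσ : 0 < σ) (hγ0 : 0 ≤ γ)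
    (hγ : γ < 2 / σ) (hT : 0 < T)
    (A : Matrix (Fin 2) (Fin 2) ℝ) (hA : A = !![0, -1; 1 / σ ^ 2, γ])
    (ω : ℝ) (hω : ω = Real.sqrt (1 / σ ^ 2 - γ ^ 2 / 4)) :
    NormedSpace.exp (-(T • A)) 0 0 =
      Real.exp (-(γ * T) / 2) * (Real.cos (T * ω) + γ / (2 * ω) * Real.sin (T * ω)) :=
  langevin_acf_underdamped_general σ γ T hγ0 hγ A hA ω hω
end

section
/- Let σ > 0, let γ > 2/σ, and let T > 0. Let A be the real 2×2 matrix A = !![0, -1; 1/σ^2, γ] and set ω = √(γ²/4 − 1/σ²). Then the (1,1) entry of the matrix exponential exp(−T·A) equals e^{−γT/2}·(cosh(Tω) + (γ/(2ω))·sinh(Tω)). -/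
open Matrix Real

/-!
Write `-T • A = -(γT/2) • 1 + N`. The traceless part `N` satisfies `N² = (Tω)² • 1`, so the even
and odd halves of its exponential series are the series of `cosh (Tω)` and `sinh (Tω) / (Tω)`,
and `exp N = cosh (Tω) • 1 + (sinh (Tω) / (Tω)) • N`. The scalar part contributes `e^{-γT/2}`.
-/

namespace NormedSpace

theorem exp_eq_cosh_add_sinh_of_mul_self_eq {𝔸 : Type*} [Ring 𝔸] [Algebra ℝ 𝔸]
    [TopologicalSpace 𝔸] [IsTopologicalRing 𝔸] [ContinuousSMul ℝ 𝔸] [T2Space 𝔸]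
    {N : 𝔸} {a : ℝ} (ha : a ≠ 0) (hN : N * N = algebraMap ℝ 𝔸 (a ^ 2)) :
    exp N = algebraMap ℝ 𝔸 (cosh a) + (sinh a / a) • N := by
  have h_even (n : ℕ) : N ^ (2 * n) = algebraMap ℝ 𝔸 (a ^ (2 * n)) := by
    rw [pow_mul, sq, hN, ← map_pow, ← pow_mul]
  have h_odd (n : ℕ) : N ^ (2 * n + 1) = (a ^ (2 * n + 1) / a) • N := by
    rw [pow_succ, h_even, ← Algebra.smul_def, pow_succ, mul_div_cancel_right₀ _ ha]
  rw [exp_eq_tsum ℝ]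
  refine HasSum.tsum_eq (HasSum.even_add_odd ?_ ?_)
  · simp_rw [h_even, Algebra.algebraMap_eq_smul_one, smul_smul]
    convert (hasSum_cosh a).smul_const (1 : 𝔸) using 3 with n
    rw [inv_mul_eq_div]
  · convert ((hasSum_sinh a).div_const a).smul_const N using 2 with n
    rw [h_odd, smul_smul]
    congr 1
    ring

theorem exp_algebraMap_add {𝔸 : Type*} [NormedRing 𝔸] [NormedAlgebra ℝ 𝔸] [CompleteSpace 𝔸]
    (c : ℝ) (N : 𝔸) :
    exp (algebraMap ℝ 𝔸 c + N) = Real.exp c • exp N := by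
  let +nondep : NormedAlgebra ℚ 𝔸 := .restrictScalars ℚ ℝ 𝔸
  rw [exp_add_of_commute (Algebra.commutes c N), ← algebraMap_exp_comm, ← Algebra.smul_def,
    Real.exp_eq_exp_ℝ]

end NormedSpace

/-- Overdamped regime of the Langevin autocorrelation formula (eq_corr_langevin):
for `γ > 2/σ`, the (1,1) entry of `exp(-T·A)` with `A = !![0, -1; 1/σ², γ]` equals
`e^{-γT/2}(cosh(Tω) + (γ/(2ω)) sinh(Tω))` where `ω = √(γ²/4 - 1/σ²)`. -/
theorem langevin_acf_overdamped (σ γ T : ℝ) (hσ : 0 < σ) (hγ : 2 / σ < γ) (hT : 0 < T)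
    (A : Matrix (Fin 2) (Fin 2) ℝ) (hA : A = !![0, -1; 1 / σ ^ 2, γ])
    (ω : ℝ) (hω : ω = Real.sqrt (γ ^ 2 / 4 - 1 / σ ^ 2)) :
    NormedSpace.exp (-(T • A)) 0 0 =
      Real.exp (-(γ * T) / 2) * (Real.cosh (T * ω) + γ / (2 * ω) * Real.sinh (T * ω)) := by
  -- `exp` only sees the topology, which every matrix norm induces
  let := Matrix.linftyOpNormedRing (n := Fin 2) (α := ℝ)
  let := Matrix.linftyOpNormedAlgebra (R := ℝ) (n := Fin 2) (α := ℝ)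
  have hdisc : 0 < γ ^ 2 / 4 - 1 / σ ^ 2 := by
    have : 2 < γ * σ := by rwa [div_lt_iff₀ hσ] at hγ
    rw [sub_pos, div_lt_div_iff₀ (by positivity) four_pos]
    nlinarith
  have hω_pos : 0 < ω := hω ▸ sqrt_pos.mpr hdisc
  have hω_sq : ω ^ 2 = γ ^ 2 / 4 - 1 / σ ^ 2 := hω ▸ sq_sqrt hdisc.le
  set N : Matrix (Fin 2) (Fin 2) ℝ := T • !![γ / 2, 1; -1 / σ ^ 2, -γ / 2] with hN_def
  have h_split : -(T • A) = algebraMap ℝ _ (-(γ * T) / 2) + N := by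
    ext i j; fin_cases i <;> fin_cases j <;> simp [hA, hN_def, algebraMap_matrix_apply] <;> ring
  have hN : N * N = algebraMap ℝ _ ((T * ω) ^ 2) := by
    rw [mul_pow, hω_sq, Algebra.algebraMap_eq_smul_one]
    ext i j; fin_cases i <;> fin_cases j <;> simp [hN_def, mul_apply, Fin.sum_univ_two] <;> ring
  have h_exp : NormedSpace.exp (-(T • A)) = Real.exp (-(γ * T) / 2) •
      (algebraMap ℝ _ (cosh (T * ω)) + (sinh (T * ω) / (T * ω)) • N) := by
    rw [h_split]
    exact (NormedSpace.exp_algebraMap_add _ N).trans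
      (congrArg _ (NormedSpace.exp_eq_cosh_add_sinh_of_mul_self_eq (by positivity) hN))
  rw [h_exp]
  simp [hN_def, algebraMap_matrix_apply]
  field_simp
end

section
/- Let d ≥ 1, let H be a real symmetric d×d matrix, and let p, p₀, q, q₀, u₀ be real numbers. Then the 2d×2d block matrix with blocks [[p·H + p₀·I, q·H + q₀·I],[q·H + q₀·I, u₀·I]] is positive semidefinite if and only if for every eigenvalue σ of H one has: p·σ + p₀ ≥ 0, u₀ ≥ 0, and (q·σ + q₀)² ≤ (p·σ + p₀)·u₀ (equivalently, the 2×2 matrix !![p·σ + p₀, q·σ + q₀; q·σ + q₀, u₀] is positive semidefinite). -/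
/-!
Diagonalise `H = U D Uᵀ` with `U` orthogonal. Conjugating the block matrix by `diag(U, U)`
turns each block into a diagonal matrix, so the quadratic form splits into a sum of
independent binary forms `a s² + 2 b s t + c t²`, one per eigenvalue of `H`, and such a sum
is nonnegative exactly when every summand is.
-/

open Matrix

lemma quadratic_nonneg_of_discrim {a b c : ℝ} (ha : 0 ≤ a) (hc : 0 ≤ c) (hb : b ^ 2 ≤ a * c)
    (s t : ℝ) : 0 ≤ a * s ^ 2 + 2 * b * s * t + c * t ^ 2 := by
  rcases ha.eq_or_lt with rfl | ha
  · obtain rfl : b = 0 := by nlinarith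
    nlinarith [mul_nonneg hc (sq_nonneg t)]
  · -- `a (a s² + 2 b s t + c t²) = (a s + b t)² + (a c - b²) t²`
    nlinarith [sq_nonneg (a * s + b * t), mul_nonneg (sub_nonneg.2 hb) (sq_nonneg t)]

lemma forall_quadratic_nonneg_iff {a b c : ℝ} :
    (∀ s t : ℝ, 0 ≤ a * s ^ 2 + 2 * b * s * t + c * t ^ 2) ↔
      0 ≤ a ∧ 0 ≤ c ∧ b ^ 2 ≤ a * c := by
  refine ⟨fun h => ⟨by simpa using h 1 0, by simpa using h 0 1, ?_⟩,
    fun ⟨ha, hc, hb⟩ => quadratic_nonneg_of_discrim ha hc hb⟩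
  have hdisc := discrim_le_zero (a := a) (b := 2 * b) (c := c) fun s => by nlinarith [h s 1]
  rw [discrim] at hdisc
  nlinarith

section FromBlocks

variable {n : Type*} [Fintype n]

lemma sumElim_dotProduct_fromBlocks_diagonal_mulVec [DecidableEq n] (a b c y z : n → ℝ) :
    Sum.elim y z ⬝ᵥ
        (fromBlocks (diagonal a) (diagonal b) (diagonal b) (diagonal c) *ᵥ Sum.elim y z) =
      ∑ i, (a i * y i ^ 2 + 2 * b i * y i * z i + c i * z i ^ 2) := by
  rw [fromBlocks_mulVec, sumElim_dotProduct_sumElim]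
  simp only [dotProduct, Pi.add_apply, mulVec_diagonal, Sum.elim_comp_inl, Sum.elim_comp_inr,
    ← Finset.sum_add_distrib]
  exact Finset.sum_congr rfl fun i _ => by ring

lemma fromBlocks_diagonal_posSemidef_iff [DecidableEq n] (a b c : n → ℝ) :
    (fromBlocks (diagonal a) (diagonal b) (diagonal b) (diagonal c)).PosSemidef ↔
      ∀ i, 0 ≤ a i ∧ 0 ≤ c i ∧ b i ^ 2 ≤ a i * c i := by
  have hsymm : (fromBlocks (diagonal a) (diagonal b) (diagonal b) (diagonal c)).IsHermitian := by
    simp only [IsHermitian, fromBlocks_conjTranspose, diagonal_conjTranspose, star_trivial]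
  simp only [posSemidef_iff_dotProduct_mulVec, hsymm, true_and, star_trivial]
  constructor
  · intro h i
    refine forall_quadratic_nonneg_iff.mp fun s t => ?_
    simpa [sumElim_dotProduct_fromBlocks_diagonal_mulVec, Pi.single_apply, apply_ite (· ^ 2),
      Finset.sum_add_distrib] using h (Sum.elim (Pi.single i s) (Pi.single i t))
  · intro h x
    rw [← Sum.elim_comp_inl_inr x, sumElim_dotProduct_fromBlocks_diagonal_mulVec]
    exact Finset.sum_nonneg fun i _ =>
      quadratic_nonneg_of_discrim (h i).1 (h i).2.1 (h i).2.2 _ _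

lemma fromBlocks_diag_mul_fromBlocks_mul_star {R : Type*} [Ring R] [StarRing R]
    (U A B C D : Matrix n n R) :
    fromBlocks U 0 0 U * fromBlocks A B C D * star (fromBlocks U 0 0 U) =
      fromBlocks (U * A * star U) (U * B * star U) (U * C * star U) (U * D * star U) := by
  simp [star_eq_conjTranspose, fromBlocks_conjTranspose, fromBlocks_multiply]

lemma isUnit_fromBlocks_diag [DecidableEq n] {R : Type*} [CommRing R] {U : Matrix n n R}
    (hU : IsUnit U) :
    IsUnit (fromBlocks U 0 0 U) := by
  rw [isUnit_iff_isUnit_det, det_fromBlocks_zero₂₁]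
  exact (hU.map detMonoidHom).mul (hU.map detMonoidHom)

end FromBlocks

lemma Matrix.IsHermitian.smul_add_smul_one_eq_conj_diagonal {n : Type*} [Fintype n]
    [DecidableEq n] {A : Matrix n n ℝ} (hA : A.IsHermitian) (r r₀ : ℝ) :
    r • A + r₀ • 1 =
      (hA.eigenvectorUnitary : Matrix n n ℝ) * diagonal (fun i => r * hA.eigenvalues i + r₀) *
        star (hA.eigenvectorUnitary : Matrix n n ℝ) := by
  conv_lhs => rw [hA.spectral_theorem]
  rw [← map_one (Unitary.conjStarAlgAut ℝ _ hA.eigenvectorUnitary), ← map_smul, ← map_smul,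
    ← map_add, Unitary.conjStarAlgAut_apply, RCLike.ofReal_real_eq_id, Function.id_comp]
  congr 2
  ext i j
  by_cases hij : i = j <;> simp [diagonal, hij]

theorem blockMatrix_posSemidef_iff_eigenvalues_general (d : ℕ)
    (H : Matrix (Fin d) (Fin d) ℝ) (hH : H.IsSymm) (p p₀ q q₀ u₀ : ℝ) :
    (Matrix.fromBlocks (p • H + p₀ • 1) (q • H + q₀ • 1)
        (q • H + q₀ • 1) (u₀ • (1 : Matrix (Fin d) (Fin d) ℝ))).PosSemidef ↔
      ∀ σ ∈ spectrum ℝ H,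
        0 ≤ p * σ + p₀ ∧ 0 ≤ u₀ ∧ (q * σ + q₀) ^ 2 ≤ (p * σ + p₀) * u₀ := by
  have hH' : H.IsHermitian := isHermitian_iff_isSymm.mpr hH
  have hu₀ : u₀ • (1 : Matrix (Fin d) (Fin d) ℝ) = (0 : ℝ) • H + u₀ • 1 := by simp
  rw [hu₀, hH'.smul_add_smul_one_eq_conj_diagonal, hH'.smul_add_smul_one_eq_conj_diagonal,
    hH'.smul_add_smul_one_eq_conj_diagonal, ← fromBlocks_diag_mul_fromBlocks_mul_star,
    (isUnit_fromBlocks_diag Unitary.isUnit_coe).posSemidef_star_right_conjugate_iff,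
    fromBlocks_diagonal_posSemidef_iff, hH'.spectrum_real_eq_range_eigenvalues,
    Set.forall_mem_range]
  simp only [zero_mul, zero_add]

/-- Key linear-algebra step in the proof of Lemma generator_bound: a block matrix whose
four blocks are affine polynomials of the same real symmetric matrix `H` (with the
lower-right block a multiple of the identity) is positive semidefinite exactly when,
for each eigenvalue `σ` of `H`, the attached 2×2 matrix
`!![p·σ + p₀, q·σ + q₀; q·σ + q₀, u₀]` is positive semidefinite, i.e.
`p·σ + p₀ ≥ 0`, `u₀ ≥ 0` and `(q·σ + q₀)² ≤ (p·σ + p₀)·u₀`. -/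
theorem blockMatrix_posSemidef_iff_eigenvalues (d : ℕ) (hd : 1 ≤ d)
    (H : Matrix (Fin d) (Fin d) ℝ) (hH : H.IsSymm) (p p₀ q q₀ u₀ : ℝ) :
    (Matrix.fromBlocks (p • H + p₀ • 1) (q • H + q₀ • 1)
        (q • H + q₀ • 1) (u₀ • (1 : Matrix (Fin d) (Fin d) ℝ))).PosSemidef ↔
      ∀ σ ∈ spectrum ℝ H,
        0 ≤ p * σ + p₀ ∧ 0 ≤ u₀ ∧ (q * σ + q₀) ^ 2 ≤ (p * σ + p₀) * u₀ :=
  blockMatrix_posSemidef_iff_eigenvalues_general d H hH p p₀ q q₀ u₀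
end

section
/- Let d ≥ 1, let Φ : ℝ^d → ℝ be differentiable with (Borel measurable) gradient ∇Φ, let h > 0, and let L ≥ 1. Define the leapfrog map θ_h : ℝ^d × ℝ^d → ℝ^d × ℝ^d by θ_h(x,v) = (x₁, v₁), where v_{1/2} = v − (h/2)∇Φ(x), x₁ = x + h·v_{1/2}, v₁ = v_{1/2} − (h/2)∇Φ(x₁). Let H(x,v) = Φ(x) + |v|²/2, let θ_h^L be the L-fold composition of θ_h, and define Δ : ℝ^d × ℝ^d → ℝ by Δ(z) = H(θ_h^L(z)) − H(z). Let f : ℝ → ℝ be Borel measurable such that z ↦ f(Δ(z))·e^{−H(z)} is Lebesgue-integrable on ℝ^d × ℝ^d. Then z ↦ f(−Δ(z))·e^{−Δ(z)}·e^{−H(z)} is Lebesgue-integrable on ℝ^d × ℝ^d and ∫ f(−Δ(z))·e^{−Δ(z)}·e^{−H(z)} dz = ∫ f(Δ(z))·e^{−H(z)} dz. -/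
/-!
The map `R = flip ∘ θ_h^L`, where `flip (x, v) = (x, -v)`, is an involution (time reversibility
of leapfrog) and preserves Lebesgue measure (leapfrog is a composition of shears, and the flip
preserves volume). Since `H ∘ flip = H`, we have `Δ = H ∘ R - H`, hence `Δ ∘ R = -Δ` and
`e^{-H ∘ R} = e^{-Δ} e^{-H}`. The identity is the change of variables `z ↦ R z` in
`∫ f(Δ) e^{-H}`.
-/

open MeasureTheory

noncomputable section

/-- The Störmer–Verlet (leapfrog) step with time-step `h` for the potential `Φ`. -/
def leapfrog {d : ℕ} (Φ : EuclideanSpace ℝ (Fin d) → ℝ) (h : ℝ)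
    (z : EuclideanSpace ℝ (Fin d) × EuclideanSpace ℝ (Fin d)) :
    EuclideanSpace ℝ (Fin d) × EuclideanSpace ℝ (Fin d) :=
  let vhalf := z.2 - (h / 2) • gradient Φ z.1
  let x₁ := z.1 + h • vhalf
  (x₁, vhalf - (h / 2) • gradient Φ x₁)

/-- The Hamiltonian `H(x,v) = Φ(x) + |v|²/2`. -/
def hamiltonian {d : ℕ} (Φ : EuclideanSpace ℝ (Fin d) → ℝ)
    (z : EuclideanSpace ℝ (Fin d) × EuclideanSpace ℝ (Fin d)) : ℝ :=
  Φ z.1 + ‖z.2‖ ^ 2 / 2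

open Function

theorem Function.Involutive.comp_iterate {α : Type*} {σ f : α → α} (hσ : Involutive σ)
    (hσf : Involutive (σ ∘ f)) (n : ℕ) : Involutive (σ ∘ f^[n]) := by
  have reverse (w : α) : f (σ (f w)) = σ w := by
    simpa only [comp_apply, hσ _] using congrArg σ (hσf w)
  induction n with
  | zero => exact hσ
  | succ n ih =>
    intro z
    rw [comp_apply, comp_apply, iterate_succ_apply' f n z, iterate_succ_apply, reverse]
    exact ih z

theorem MeasureTheory.MeasurePreserving.integrable_and_integral_skew_of_involutive {α : Type*}
    [MeasurableSpace α] {μ : Measure α} {R : α → α} (hR : MeasurePreserving R μ μ)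
    (hinv : Involutive R) {H Δ : α → ℝ} (hΔ : ∀ z, Δ z = H (R z) - H z) (f : ℝ → ℝ)
    (hint : Integrable (fun z => f (Δ z) * Real.exp (-H z)) μ) :
    Integrable (fun z => f (-Δ z) * Real.exp (-Δ z) * Real.exp (-H z)) μ ∧
      ∫ z, f (-Δ z) * Real.exp (-Δ z) * Real.exp (-H z) ∂μ =
        ∫ z, f (Δ z) * Real.exp (-H z) ∂μ := by
  have hΔR (z : α) : Δ (R z) = -Δ z := by rw [hΔ, hΔ, hinv]; ring
  have hcomp : (fun z => f (Δ z) * Real.exp (-H z)) ∘ R =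
      fun z => f (-Δ z) * Real.exp (-Δ z) * Real.exp (-H z) := by
    funext z
    rw [comp_apply, hΔR, show H (R z) = Δ z + H z by rw [hΔ]; ring, neg_add, Real.exp_add,
      mul_assoc]
  have hemb : MeasurableEmbedding R :=
    (MeasurableEquiv.ofInvolutive R hinv hR.measurable).measurableEmbedding
  refine ⟨hcomp ▸ (hR.integrable_comp_emb hemb).2 hint, ?_⟩
  calc ∫ z, f (-Δ z) * Real.exp (-Δ z) * Real.exp (-H z) ∂μ
      = ∫ z, ((fun z => f (Δ z) * Real.exp (-H z)) ∘ R) z ∂μ := by rw [hcomp]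
    _ = ∫ z, f (Δ z) * Real.exp (-H z) ∂μ :=
      hR.integral_comp hemb (fun z => f (Δ z) * Real.exp (-H z))

theorem measurePreserving_prod_add_comp_fst {α G : Type*} [MeasurableSpace α]
    [MeasurableSpace G] [AddGroup G] [MeasurableAdd₂ G] (μ : Measure α) (ν : Measure G)
    [SFinite μ] [SFinite ν] [ν.IsAddRightInvariant] {g : α → G} (hg : Measurable g) :
    MeasurePreserving (fun z : α × G => (z.1, z.2 + g z.1)) (μ.prod ν) (μ.prod ν) :=
  (MeasurePreserving.id μ).skew_product (g := fun x v => v + g x)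
    (measurable_snd.add (hg.comp measurable_fst))
    (Filter.Eventually.of_forall fun x => map_add_right_eq_self ν (g x))

def velocityFlip {E : Type*} [Neg E] (z : E × E) : E × E := (z.1, -z.2)

theorem velocityFlip_involutive {E : Type*} [InvolutiveNeg E] :
    Involutive (velocityFlip : E × E → E × E) := fun z => by simp [velocityFlip]

theorem measurePreserving_velocityFlip {E : Type*} [MeasurableSpace E] [InvolutiveNeg E]
    [MeasurableNeg E] (μ ν : Measure E) [SFinite μ] [SFinite ν] [ν.IsNegInvariant] :
    MeasurePreserving (velocityFlip : E × E → E × E) (μ.prod ν) (μ.prod ν) :=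
  (MeasurePreserving.id μ).prod (Measure.measurePreserving_neg ν)

section Leapfrog

variable {d : ℕ} (Φ : EuclideanSpace ℝ (Fin d) → ℝ) (h : ℝ)

theorem hamiltonian_velocityFlip (z : EuclideanSpace ℝ (Fin d) × EuclideanSpace ℝ (Fin d)) :
    hamiltonian Φ (velocityFlip z) = hamiltonian Φ z := by
  simp [hamiltonian, velocityFlip]

theorem velocityFlip_comp_leapfrog_involutive :
    Involutive (velocityFlip ∘ leapfrog Φ h) := by
  rintro ⟨x, v⟩
  simp only [comp_apply, leapfrog, velocityFlip]
  set w := v - (h / 2) • gradient Φ x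
  set x₁ := x + h • w
  -- the backward step starts with a half kick at `x₁`, which undoes the last half kick
  have hx : x₁ + h • (-(w - (h / 2) • gradient Φ x₁) - (h / 2) • gradient Φ x₁) = x := by
    simp only [x₁]
    module
  rw [hx]
  congr 1
  module

theorem measurePreserving_leapfrog (hgrad : Measurable (gradient Φ)) :
    MeasurePreserving (leapfrog Φ h) volume volume := by
  let E := EuclideanSpace ℝ (Fin d)
  have kick : MeasurePreserving (fun z : E × E => (z.1, z.2 + -(h / 2) • gradient Φ z.1))
      volume volume :=
    measurePreserving_prod_add_comp_fst volume volume (hgrad.const_smul (-(h / 2)))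
  have drift : MeasurePreserving (fun z : E × E => (z.1 + h • z.2, z.2)) volume volume :=
    Measure.measurePreserving_swap.comp
      ((measurePreserving_prod_add_comp_fst volume volume (measurable_const_smul h)).comp
        Measure.measurePreserving_swap)
  convert kick.comp (drift.comp kick) using 1
  funext z
  simp [leapfrog, E, sub_eq_add_neg]

end Leapfrog

theorem energy_difference_skew_identity_general (d : ℕ)
    (Φ : EuclideanSpace ℝ (Fin d) → ℝ)
    (hgrad : Measurable (gradient Φ)) (h : ℝ) (L : ℕ)
    (Δ : EuclideanSpace ℝ (Fin d) × EuclideanSpace ℝ (Fin d) → ℝ)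
    (hΔ : ∀ z, Δ z = hamiltonian Φ ((leapfrog Φ h)^[L] z) - hamiltonian Φ z)
    (f : ℝ → ℝ)
    (hint : Integrable (fun z => f (Δ z) * Real.exp (-hamiltonian Φ z))) :
    Integrable (fun z => f (-Δ z) * Real.exp (-Δ z) * Real.exp (-hamiltonian Φ z)) ∧
      ∫ z, f (-Δ z) * Real.exp (-Δ z) * Real.exp (-hamiltonian Φ z) =
        ∫ z, f (Δ z) * Real.exp (-hamiltonian Φ z) := by
  have hR : MeasurePreserving (velocityFlip ∘ (leapfrog Φ h)^[L]) volume volume :=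
    (measurePreserving_velocityFlip volume volume).comp
      ((measurePreserving_leapfrog Φ h hgrad).iterate L)
  refine hR.integrable_and_integral_skew_of_involutive
    (velocityFlip_involutive.comp_iterate (velocityFlip_comp_leapfrog_involutive Φ h) L)
    (fun z => ?_) f hint
  rw [hΔ, comp_apply, hamiltonian_velocityFlip]

/-- Proposition log-AR_properties (ii), case γ = 0 (HMC): the total energy difference
`Δ(z) = H(θ_h^L z) - H(z)` of an `L`-step leapfrog trajectory satisfies the log
Metropolis–Hastings identity `E[f(-Δ) e^{-Δ}] = E[f(Δ)]` under the unnormalized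
extended target `e^{-H}` (Lebesgue reference measure). -/
theorem energy_difference_skew_identity (d : ℕ) (hd : 1 ≤ d)
    (Φ : EuclideanSpace ℝ (Fin d) → ℝ) (hΦ : Differentiable ℝ Φ)
    (hgrad : Measurable (gradient Φ)) (h : ℝ) (hh : 0 < h) (L : ℕ) (hL : 1 ≤ L)
    (Δ : EuclideanSpace ℝ (Fin d) × EuclideanSpace ℝ (Fin d) → ℝ)
    (hΔ : ∀ z, Δ z = hamiltonian Φ ((leapfrog Φ h)^[L] z) - hamiltonian Φ z)
    (f : ℝ → ℝ) (hf : Measurable f)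
    (hint : Integrable (fun z => f (Δ z) * Real.exp (-hamiltonian Φ z))) :
    Integrable (fun z => f (-Δ z) * Real.exp (-Δ z) * Real.exp (-hamiltonian Φ z)) ∧
      ∫ z, f (-Δ z) * Real.exp (-Δ z) * Real.exp (-hamiltonian Φ z) =
        ∫ z, f (Δ z) * Real.exp (-hamiltonian Φ z) :=
  energy_difference_skew_identity_general d Φ hgrad h L Δ hΔ f hint

end
end

section
/- Let σ > 0 and let μ be the Gaussian probability measure on ℝ with mean −σ²/2 and variance σ². Then ∫ min(1, e^y) dμ(y) = 2·Ψ(−σ/2), where Ψ is the cumulative distribution function of the standard Gaussian measure on ℝ. -/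
/-!
Split the integral at `y = 0`, where `min 1 (exp y)` switches from `exp y` to `1`. Completing the
square, the density of `N(m, v)` times `eʸ` is `e^{m + v/2}` times the density of `N(m + v, v)`, so
for `m = -σ²/2` the integral equals `N(σ²/2, σ²)(-∞, 0] + N(-σ²/2, σ²)(0, ∞)`. Standardizing,
each term is `Ψ(-σ/2)`.
-/

open MeasureTheory ProbabilityTheory Real Set
open scoped NNReal

namespace ProbabilityTheory

lemma integral_min_one_exp (μ : Measure ℝ) [IsFiniteMeasure μ] :
    ∫ y, min 1 (exp y) ∂μ = ∫ y in Iic 0, exp y ∂μ + μ.real (Ioi 0) := by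
  have hint : Integrable (fun y ↦ min 1 (exp y)) μ := by
    refine Integrable.mono' (integrable_const 1) (by fun_prop) (ae_of_all _ fun y ↦ ?_)
    rw [norm_of_nonneg (by positivity)]
    exact min_le_left _ _
  rw [← integral_add_compl measurableSet_Iic hint, compl_Iic]
  congr 1
  · exact setIntegral_congr_fun measurableSet_Iic fun y hy ↦ min_eq_right (exp_le_one_iff.mpr hy)
  · rw [setIntegral_congr_fun measurableSet_Ioi fun y hy ↦ min_eq_left (one_le_exp (le_of_lt hy)),
      setIntegral_const, smul_eq_mul, mul_one]

lemma gaussianPDFReal_mul_exp (m : ℝ) (v : ℝ≥0) (y : ℝ) :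
    gaussianPDFReal m v y * exp y = exp (m + v / 2) * gaussianPDFReal (m + v) v y := by
  rcases eq_or_ne v 0 with rfl | hv
  · simp [gaussianPDFReal] -- both densities are junk `0`, since `(√0)⁻¹ = 0`
  have hv' : (v : ℝ) ≠ 0 := NNReal.coe_ne_zero.mpr hv
  simp only [gaussianPDFReal]
  rw [mul_left_comm, mul_assoc, ← exp_add, ← exp_add]
  congr 2
  field_simp
  ring

lemma setIntegral_gaussianReal {m : ℝ} {v : ℝ≥0} (hv : v ≠ 0) {s : Set ℝ} (hs : MeasurableSet s)
    (f : ℝ → ℝ) :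
    ∫ y in s, f y ∂gaussianReal m v = ∫ y in s, gaussianPDFReal m v y * f y := by
  rw [← integral_indicator hs, ← integral_indicator hs, integral_gaussianReal_eq_integral_smul hv]
  congr with y
  by_cases hy : y ∈ s <;> simp [hy]

lemma gaussianReal_real_eq_setIntegral (m : ℝ) {v : ℝ≥0} (hv : v ≠ 0) (s : Set ℝ) :
    (gaussianReal m v).real s = ∫ y in s, gaussianPDFReal m v y := by
  rw [Measure.real, gaussianReal_apply_eq_integral m hv,
    ENNReal.toReal_ofReal (integral_nonneg (gaussianPDFReal_nonneg m v))]

lemma setIntegral_exp_gaussianReal {m : ℝ} {v : ℝ≥0} (hv : v ≠ 0) {s : Set ℝ}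
    (hs : MeasurableSet s) :
    ∫ y in s, exp y ∂gaussianReal m v = exp (m + v / 2) * (gaussianReal (m + v) v).real s := by
  simp_rw [setIntegral_gaussianReal hv hs, gaussianPDFReal_mul_exp, integral_const_mul,
    gaussianReal_real_eq_setIntegral _ hv]

lemma gaussianReal_eq_map_affine (m : ℝ) (v : ℝ≥0) :
    gaussianReal m v = (gaussianReal 0 1).map (fun x ↦ √v * x + m) := by
  rw [show (fun x ↦ √v * x + m) = (· + m) ∘ (√v * ·) from rfl,
    ← Measure.map_map (by fun_prop) (by fun_prop), gaussianReal_map_const_mul,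
    gaussianReal_map_add_const]
  congr
  · simp
  · ext; simp

lemma gaussianReal_Iic (m : ℝ) {v : ℝ≥0} (hv : v ≠ 0) (x : ℝ) :
    gaussianReal m v (Iic x) = gaussianReal 0 1 (Iic ((x - m) / √v)) := by
  have hsqrt : 0 < √(v : ℝ) := sqrt_pos.mpr (by positivity)
  rw [gaussianReal_eq_map_affine m v, Measure.map_apply (by fun_prop) measurableSet_Iic]
  congr with y
  simp only [mem_preimage, mem_Iic, le_div_iff₀ hsqrt]
  constructor <;> intro h <;> linarith

lemma gaussianReal_Ioi (m : ℝ) {v : ℝ≥0} (hv : v ≠ 0) (x : ℝ) :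
    gaussianReal m v (Ioi x) = gaussianReal 0 1 (Iic ((m - x) / √v)) := by
  have : NullSingletonClass (gaussianReal (-m) v) := nullSingletonClass_gaussianReal hv
  rw [← neg_neg m, ← gaussianReal_map_neg, Measure.map_apply (by fun_prop) measurableSet_Ioi,
    show (fun y : ℝ ↦ -y) ⁻¹' Ioi x = Iio (-x) by ext; simp,
    measure_congr Iio_ae_eq_Iic, gaussianReal_Iic _ hv]
  ring_nf

end ProbabilityTheory

/-- Proposition SingleCoordinateDisplacement (i): if `μ` is the Gaussian measure with
mean `-σ²/2` and variance `σ²`, then `∫ min(1, eʸ) dμ(y) = 2·Ψ(-σ/2)` where `Ψ` is the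
standard Gaussian CDF. -/
theorem gaussian_acceptance_rate (σ : ℝ) (hσ : 0 < σ) :
    ∫ y, min 1 (Real.exp y) ∂(gaussianReal (-σ ^ 2 / 2) ⟨σ ^ 2, sq_nonneg σ⟩) =
      2 * ((gaussianReal 0 1) (Set.Iic (-σ / 2))).toReal := by
  set v : ℝ≥0 := ⟨σ ^ 2, sq_nonneg σ⟩
  have hv_coe : (v : ℝ) = σ ^ 2 := rfl
  have hv : v ≠ 0 := ne_of_gt (show (0 : ℝ) < σ ^ 2 by positivity)
  have hsqrt : √(v : ℝ) = σ := sqrt_sq hσ.le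
  have hupper : (0 - (-σ ^ 2 / 2 + σ ^ 2)) / σ = -σ / 2 := by field_simp; ring
  have hlower : (-σ ^ 2 / 2 - 0) / σ = -σ / 2 := by field_simp; ring
  rw [integral_min_one_exp, setIntegral_exp_gaussianReal hv measurableSet_Iic, Measure.real,
    Measure.real, gaussianReal_Iic _ hv, gaussianReal_Ioi _ hv, hsqrt, hv_coe,
    show -σ ^ 2 / 2 + σ ^ 2 / 2 = 0 by ring, exp_zero, one_mul, hupper, hlower, two_mul]
end
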